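/- Real part of the undephased heat-absorbed variance: in the qubit Otto setup with ρ₂ = U ρ₁ U†, one has Tr[H₂ Φ(H₂ρ₂ + ρ₂H₂)] = 2ν₂²(1 − 2θ); consequently the real part of the second cumulant of the stochastic heat absorbed of the undephased engine is ⟨Q_M²⟩_c = 2ν₂² − Tr[H₂ Φ(H₂ρ₂ + ρ₂H₂)] − ⟨Q_M⟩² = 4θν₂² − ⟨Q_M⟩², where ⟨Q_M⟩ = 2(θ_c − δ′)ν₂ tanh(βν₁). -/

import Mathlib

/-!
For `2 × 2` matrices the polarized Cayley–Hamilton identity gives `H ρ + ρ H = H + Tr(H ρ) • 1`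
whenever `Tr H = 0` and `Tr ρ = 1`, so for a unital channel `Tr[H Φ(H ρ + ρ H)] = Tr[H Φ(H)]`:
the state `ρ₂` only enters through its trace. Writing `H₂ = ν₂ (P − Q)` with `P + Q = 1` and using
that `Φ` is trace preserving, `Tr[H₂ Φ(H₂)] = ν₂² (2 − 4 Tr[Q Φ(P)]) = 2 ν₂² (1 − 2θ)`.
The cumulant identity is then arithmetic.
-/

open Matrix

section Kraus

variable {n ι R : Type*} [Fintype n] [Fintype ι] [CommSemiring R] [Star R]

def krausMap (Kr : ι → Matrix n n R) : Matrix n n R →ₗ[R] Matrix n n R where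
  toFun X := ∑ k, Kr k * X * (Kr k)ᴴ
  map_add' X Y := by simp only [mul_add, add_mul, Finset.sum_add_distrib]
  map_smul' c X := by
    simp only [Matrix.mul_smul, Matrix.smul_mul, Finset.smul_sum, RingHom.id_apply]

theorem krausMap_apply (Kr : ι → Matrix n n R) (X : Matrix n n R) :
    krausMap Kr X = ∑ k, Kr k * X * (Kr k)ᴴ :=
  rfl

theorem krausMap_one [DecidableEq n] {Kr : ι → Matrix n n R} (h : ∑ k, Kr k * (Kr k)ᴴ = 1) :
    krausMap Kr 1 = 1 := by
  simpa only [krausMap_apply, Matrix.mul_one] using h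

theorem trace_krausMap [DecidableEq n] {Kr : ι → Matrix n n R} (h : ∑ k, (Kr k)ᴴ * Kr k = 1)
    (X : Matrix n n R) : (krausMap Kr X).trace = X.trace := by
  simp only [krausMap_apply, trace_sum, trace_mul_cycle _ X]
  rw [← trace_sum, ← Finset.sum_mul, h, Matrix.one_mul]

end Kraus

section RankOne

variable {n R : Type*} [Fintype n]

theorem trace_vecMulVec_mul [CommSemiring R] (u v : n → R) (M : Matrix n n R) :
    (vecMulVec u v * M).trace = v ⬝ᵥ (M *ᵥ u) := by
  rw [vecMulVec_mul, trace_vecMulVec, dotProduct_comm, dotProduct_mulVec]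

theorem sum_vecMulVec_star_eq_one [DecidableEq n] [CommRing R] [StarRing R] (v : n → n → R)
    (hv : ∀ i j, star (v i) ⬝ᵥ v j = (1 : Matrix n n R) i j) :
    ∑ i, vecMulVec (v i) (star (v i)) = 1 := by
  -- the matrix with columns `v i` is unitary, hence also co-isometric
  let M : Matrix n n R := of fun a i => v i a
  have hM : M * Mᴴ = 1 := mul_eq_one_comm.mp <| by
    ext i j
    simpa [M, mul_apply, dotProduct] using hv i j
  ext a b
  simpa [M, mul_apply, vecMulVec_apply, Matrix.sum_apply] using congrFun (congrFun hM a) b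

theorem vecMulVec_add_vecMulVec_eq_one [CommRing R] [StarRing R] {u v : Fin 2 → R}
    (hu : star u ⬝ᵥ u = 1) (hv : star v ⬝ᵥ v = 1) (huv : star u ⬝ᵥ v = 0) :
    vecMulVec u (star u) + vecMulVec v (star v) = 1 := by
  have hvu : star v ⬝ᵥ u = 0 := by rw [star_dotProduct, huv, star_zero]
  simpa [Fin.sum_univ_two] using sum_vecMulVec_star_eq_one ![u, v] <| by
    intro i j
    fin_cases i <;> fin_cases j <;> simp [hu, hv, huv, hvu]

end RankOne

section Qubit

variable {R : Type*} [CommRing R]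

/-- Polarized Cayley–Hamilton identity for `2 × 2` matrices. -/
theorem mul_add_mul_fin_two (A B : Matrix (Fin 2) (Fin 2) R) :
    A * B + B * A = B.trace • A + A.trace • B + ((A * B).trace - A.trace * B.trace) • 1 := by
  ext i j
  fin_cases i <;> fin_cases j <;>
    simp [trace_fin_two, mul_apply, Fin.sum_univ_two] <;> ring

theorem trace_mul_map_anticommutator_fin_two
    (Φ : Matrix (Fin 2) (Fin 2) R →ₗ[R] Matrix (Fin 2) (Fin 2) R) (hΦ : Φ 1 = 1)
    {H ρ : Matrix (Fin 2) (Fin 2) R} (hH : H.trace = 0) (hρ : ρ.trace = 1) :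
    (H * Φ (H * ρ + ρ * H)).trace = (H * Φ H).trace := by
  rw [mul_add_mul_fin_two, hH, hρ]
  simp [hΦ, mul_add, trace_add, hH]

end Qubit

theorem trace_smul_sub_mul_map_smul_sub {n R : Type*} [Fintype n] [DecidableEq n] [CommRing R]
    (Φ : Matrix n n R →ₗ[R] Matrix n n R) (hΦ1 : Φ 1 = 1)
    (hΦtr : ∀ X, (Φ X).trace = X.trace) {P Q : Matrix n n R} (hPQ : P + Q = 1) (c : R) :
    ((c • (P - Q)) * Φ (c • (P - Q))).trace = c ^ 2 * (Fintype.card n - 4 * (Q * Φ P).trace) := by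
  obtain rfl : Q = 1 - P := eq_sub_of_add_eq' hPQ
  simp only [map_smul, map_sub, hΦ1, hΦtr, Matrix.smul_mul, Matrix.mul_smul, sub_mul, mul_sub,
    Matrix.one_mul, Matrix.mul_one, trace_smul, trace_sub, trace_one, smul_eq_mul]
  ring

theorem trace_gibbs_two_level {n : Type*} [Fintype n] (x : ℝ) {u v : n → ℂ}
    (hu : star u ⬝ᵥ u = 1) (hv : star v ⬝ᵥ v = 1) :
    (((2 * Real.cosh x : ℝ) : ℂ)⁻¹ •
      ((Real.exp (-x) : ℂ) • vecMulVec u (star u) + (Real.exp x : ℂ) • vecMulVec v (star v))).trace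
      = 1 := by
  have hZ : ((2 * Real.cosh x : ℝ) : ℂ) ≠ 0 := by
    exact_mod_cast (by positivity : 2 * Real.cosh x ≠ 0)
  rw [trace_smul, trace_add, trace_smul, trace_smul, trace_vecMulVec, trace_vecMulVec,
    dotProduct_comm, hu, dotProduct_comm, hv, smul_eq_mul, smul_eq_mul, smul_eq_mul, mul_one,
    mul_one, inv_mul_eq_one₀ hZ, Real.cosh_eq]
  push_cast
  ring

theorem undephased_QM_variance_qubit_general
    (β ν₁ ν₂ : ℝ)
    (ep em fp fm : Fin 2 → ℂ)
    (hep : star ep ⬝ᵥ ep = 1) (hem : star em ⬝ᵥ em = 1)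
    (hfp : star fp ⬝ᵥ fp = 1) (hfm : star fm ⬝ᵥ fm = 1) (hfpm : star fp ⬝ᵥ fm = 0)
    (H₂ ρ₁ ρ₂ : Matrix (Fin 2) (Fin 2) ℂ)
    (hH₂ : H₂ = (ν₂ : ℂ) • (vecMulVec fp (star fp) - vecMulVec fm (star fm)))
    (hρ₁ : ρ₁ = ((2 * Real.cosh (β * ν₁) : ℝ) : ℂ)⁻¹ •
        ((Real.exp (-(β * ν₁)) : ℂ) • vecMulVec ep (star ep) +
         (Real.exp (β * ν₁) : ℂ) • vecMulVec em (star em)))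
    (U : Matrix (Fin 2) (Fin 2) ℂ)
    (hU : Uᴴ * U = 1)
    (hρ₂ : ρ₂ = U * ρ₁ * Uᴴ)
    {K : ℕ} (Kr : Fin K → Matrix (Fin 2) (Fin 2) ℂ)
    (hKr : ∑ k, (Kr k)ᴴ * Kr k = 1) (hKr' : ∑ k, Kr k * (Kr k)ᴴ = 1)
    (Φ : Matrix (Fin 2) (Fin 2) ℂ → Matrix (Fin 2) (Fin 2) ℂ)
    (hΦ : ∀ X, Φ X = ∑ k, Kr k * X * (Kr k)ᴴ)
    (θ : ℂ) (hθ : θ = star fm ⬝ᵥ (Φ (vecMulVec fp (star fp)) *ᵥ fm))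
    (QM : ℂ) :
    (H₂ * Φ (H₂ * ρ₂ + ρ₂ * H₂)).trace = 2 * (ν₂ : ℂ) ^ 2 * (1 - 2 * θ) ∧
    2 * (ν₂ : ℂ) ^ 2 - (H₂ * Φ (H₂ * ρ₂ + ρ₂ * H₂)).trace - QM ^ 2 =
        4 * θ * (ν₂ : ℂ) ^ 2 - QM ^ 2 := by
  obtain rfl : Φ = krausMap Kr := funext hΦ
  have hPQ := vecMulVec_add_vecMulVec_eq_one hfp hfm hfpm
  have hρ₂tr : ρ₂.trace = 1 := by
    rw [hρ₂, trace_mul_cycle, hU, Matrix.one_mul, hρ₁, trace_gibbs_two_level _ hep hem]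
  have hH₂tr : H₂.trace = 0 := by
    rw [hH₂, trace_smul, trace_sub, trace_vecMulVec, trace_vecMulVec, dotProduct_comm, hfp,
      dotProduct_comm, hfm, sub_self, smul_zero]
  have hmain :
      (H₂ * krausMap Kr (H₂ * ρ₂ + ρ₂ * H₂)).trace = 2 * (ν₂ : ℂ) ^ 2 * (1 - 2 * θ) := by
    rw [trace_mul_map_anticommutator_fin_two _ (krausMap_one hKr') hH₂tr hρ₂tr, hH₂,
      trace_smul_sub_mul_map_smul_sub _ (krausMap_one hKr') (trace_krausMap hKr) hPQ,
      trace_vecMulVec_mul, ← hθ, Fintype.card_fin]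
    ring
  exact ⟨hmain, by rw [hmain]; ring⟩

/-- Real part of the undephased heat-absorbed variance: in the qubit Otto
setup with `ρ₂ = U ρ₁ Uᴴ`, one has `Tr[H₂ Φ(H₂ ρ₂ + ρ₂ H₂)] = 2ν₂² (1 − 2θ)`; consequently
the real part of the second cumulant of the stochastic heat absorbed of the undephased
engine is `⟨Q_M²⟩_c = 2ν₂² − Tr[H₂ Φ(H₂ ρ₂ + ρ₂ H₂)] − ⟨Q_M⟩² = 4θν₂² − ⟨Q_M⟩²`, where
`⟨Q_M⟩ = 2 (θ_c − δ′) ν₂ tanh(βν₁)`. -/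
theorem undephased_QM_variance_qubit
    (β ν₁ ν₂ : ℝ) (hβ : 0 < β) (hν₁ : 0 < ν₁) (hν₂ : 0 < ν₂)
    (ep em fp fm : Fin 2 → ℂ)
    (hep : star ep ⬝ᵥ ep = 1) (hem : star em ⬝ᵥ em = 1) (hepm : star ep ⬝ᵥ em = 0)
    (hfp : star fp ⬝ᵥ fp = 1) (hfm : star fm ⬝ᵥ fm = 1) (hfpm : star fp ⬝ᵥ fm = 0)
    (H₁ H₂ ρ₁ ρ₂ : Matrix (Fin 2) (Fin 2) ℂ)
    (hH₁ : H₁ = (ν₁ : ℂ) • (vecMulVec ep (star ep) - vecMulVec em (star em)))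
    (hH₂ : H₂ = (ν₂ : ℂ) • (vecMulVec fp (star fp) - vecMulVec fm (star fm)))
    (hρ₁ : ρ₁ = ((2 * Real.cosh (β * ν₁) : ℝ) : ℂ)⁻¹ •
        ((Real.exp (-(β * ν₁)) : ℂ) • vecMulVec ep (star ep) +
         (Real.exp (β * ν₁) : ℂ) • vecMulVec em (star em)))
    (U : Matrix (Fin 2) (Fin 2) ℂ)
    (hU : Uᴴ * U = 1) (hU' : U * Uᴴ = 1)
    (hρ₂ : ρ₂ = U * ρ₁ * Uᴴ)
    {K : ℕ} (Kr : Fin K → Matrix (Fin 2) (Fin 2) ℂ)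
    (hKr : ∑ k, (Kr k)ᴴ * Kr k = 1) (hKr' : ∑ k, Kr k * (Kr k)ᴴ = 1)
    (Φ : Matrix (Fin 2) (Fin 2) ℂ → Matrix (Fin 2) (Fin 2) ℂ)
    (hΦ : ∀ X, Φ X = ∑ k, Kr k * X * (Kr k)ᴴ)
    (δ' : ℝ) (hδ' : δ' = ‖star fp ⬝ᵥ (U *ᵥ em)‖ ^ 2)
    (θ : ℂ) (hθ : θ = star fm ⬝ᵥ (Φ (vecMulVec fp (star fp)) *ᵥ fm))
    (θc : ℂ) (hθc : θc = star fm ⬝ᵥ (Φ (U * vecMulVec ep (star ep) * Uᴴ) *ᵥ fm))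
    (QM : ℂ) (hQM : QM = 2 * (θc - (δ' : ℂ)) * (ν₂ : ℂ) * (Real.tanh (β * ν₁) : ℂ)) :
    (H₂ * Φ (H₂ * ρ₂ + ρ₂ * H₂)).trace = 2 * (ν₂ : ℂ) ^ 2 * (1 - 2 * θ) ∧
    2 * (ν₂ : ℂ) ^ 2 - (H₂ * Φ (H₂ * ρ₂ + ρ₂ * H₂)).trace - QM ^ 2 =
        4 * θ * (ν₂ : ℂ) ^ 2 - QM ^ 2 :=
  undephased_QM_variance_qubit_general β ν₁ ν₂ ep em fp fm hep hem hfp hfm hfpm H₂ ρ₁ ρ₂ hH₂ hρ₁ U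
    hU hρ₂ Kr hKr hKr' Φ hΦ θ hθ QM
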